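/- arXiv:2206.11950 — 2 statements merged into one kernel-verified Lean document; each statement's English description precedes it below -/
import Mathlib

section
/- Let k_x, k_y ∈ ℝ with 0 < k_x² + k_y² < 4. Then the system τ₂ − τ₁ = k_x + i k_y, 1/τ₂ − 1/τ₁ = k_x − i k_y (τ₁, τ₂ ∈ ℂ \ {0}) has exactly the two solutions τ₁ = ((k_x + ik_y)/2)(−1 ± i√((4 − k_x² − k_y²)/(k_x² + k_y²))), τ₂ = ((k_x + ik_y)/2)(1 ± i√((4 − k_x² − k_y²)/(k_x² + k_y²))), and in both cases |τ₁| = |τ₂| = 1. -/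
/-!
With `k = kx + i ky`, the system says `τ₂ = τ₁ + k` and `τ₁ τ₂ k̄ = -k`. Substituting
`τ₁ = (k/2)(-1 + v)`, `τ₂ = (k/2)(1 + v)` turns this into `v² = 1 - 4/|k|²`, which for
`0 < |k| < 2` is negative, so `v = ± i √((4 - |k|²)/|k|²)`. Then `-1 + v` and `1 + v` have the same modulus,
so `|τ₁| = |τ₂|`, while `|τ₁ τ₂| = |k| / |k̄| = 1`.
-/

open Complex ComplexConjugate

section Field

variable {F : Type*} [Field F] {k c τ₁ τ₂ : F}

theorem sub_eq_and_inv_sub_inv_eq_iff (hτ₁ : τ₁ ≠ 0) (hτ₂ : τ₂ ≠ 0) :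
    (τ₂ - τ₁ = k ∧ τ₂⁻¹ - τ₁⁻¹ = c) ↔ (τ₂ = τ₁ + k ∧ τ₁ * τ₂ * c = -k) := by
  rw [inv_sub_inv hτ₂ hτ₁, div_eq_iff (mul_ne_zero hτ₂ hτ₁)]
  constructor <;> rintro ⟨rfl, h⟩ <;> exact ⟨by ring, by linear_combination -h⟩

theorem eq_add_and_mul_mul_eq_neg_iff [NeZero (2 : F)] (hk : k ≠ 0) (hc : c ≠ 0) :
    (τ₂ = τ₁ + k ∧ τ₁ * τ₂ * c = -k) ↔
      ∃ v, v ^ 2 = 1 - 4 / (k * c) ∧ τ₁ = k / 2 * (-1 + v) ∧ τ₂ = k / 2 * (1 + v) := by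
  constructor
  · rintro ⟨rfl, h⟩
    refine ⟨2 * τ₁ / k + 1, ?_, by field_simp; ring, by field_simp; ring⟩
    field_simp
    linear_combination 4 * h
  · rintro ⟨v, hv, rfl, rfl⟩
    refine ⟨by field_simp; ring, ?_⟩
    field_simp at hv ⊢
    linear_combination hv

end Field

theorem norm_eq_one_of_mul_mul_eq_neg {𝕜 : Type*} [NormedField 𝕜] {k c τ₁ τ₂ : 𝕜}
    (hk : k ≠ 0) (hc : ‖c‖ = ‖k‖) (h : τ₁ * τ₂ * c = -k) (heq : ‖τ₁‖ = ‖τ₂‖) : ‖τ₁‖ = 1 := by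
  have hsq : ‖τ₁‖ ^ 2 = 1 := by
    refine mul_right_cancel₀ (norm_ne_zero_iff.2 hk) ?_
    simpa [sq, heq, hc] using congrArg norm h
  exact (pow_eq_one_iff_of_nonneg (norm_nonneg _) two_ne_zero).1 hsq

theorem Complex.norm_neg_one_add_of_re_eq_zero {z : ℂ} (hz : z.re = 0) : ‖-1 + z‖ = ‖1 + z‖ := by
  simp [Complex.norm_def, normSq_apply, hz]

theorem Complex.exists_sq_eq_sq_and_iff_exists_sign {a : ℂ} {P : ℂ → Prop} :
    (∃ v, v ^ 2 = a ^ 2 ∧ P v) ↔ ∃ s : ℝ, (s = 1 ∨ s = -1) ∧ P (s * a) := by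
  constructor
  · rintro ⟨v, hv, hP⟩
    rcases sq_eq_sq_iff_eq_or_eq_neg.1 hv with rfl | rfl
    · exact ⟨1, Or.inl rfl, by simpa using hP⟩
    · exact ⟨-1, Or.inr rfl, by simpa using hP⟩
  · rintro ⟨s, hs, hP⟩
    refine ⟨s * a, ?_, hP⟩
    rcases hs with rfl | rfl <;> simp

/-- Resonant pairs for unstable modes: for `0 < kₓ² + k_y² < 4`, the system
`τ₂ − τ₁ = kₓ + ik_y`, `1/τ₂ − 1/τ₁ = kₓ − ik_y` has exactly the two solutions
`τ₁ = ((kₓ+ik_y)/2)(−1 ± i√((4−kₓ²−k_y²)/(kₓ²+k_y²)))`,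
`τ₂ = ((kₓ+ik_y)/2)(1 ± i√((4−kₓ²−k_y²)/(kₓ²+k_y²)))`, and in both cases
`|τ₁| = |τ₂| = 1`. -/
theorem resonant_pairs_unstable_modes
    (kx ky : ℝ) (h0 : 0 < kx ^ 2 + ky ^ 2) (h4 : kx ^ 2 + ky ^ 2 < 4) :
    ∀ τ₁ τ₂ : ℂ, τ₁ ≠ 0 → τ₂ ≠ 0 →
      ((τ₂ - τ₁ = (kx : ℂ) + Complex.I * (ky : ℂ) ∧
        τ₂⁻¹ - τ₁⁻¹ = (kx : ℂ) - Complex.I * (ky : ℂ))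
      ↔ (∃ s : ℝ, (s = 1 ∨ s = -1) ∧
          τ₁ = (((kx : ℂ) + Complex.I * (ky : ℂ)) / 2) *
            (-1 + (s : ℂ) * Complex.I *
              (Real.sqrt ((4 - (kx ^ 2 + ky ^ 2)) / (kx ^ 2 + ky ^ 2)) : ℂ)) ∧
          τ₂ = (((kx : ℂ) + Complex.I * (ky : ℂ)) / 2) *
            (1 + (s : ℂ) * Complex.I *
              (Real.sqrt ((4 - (kx ^ 2 + ky ^ 2)) / (kx ^ 2 + ky ^ 2)) : ℂ)))) ∧
      ((τ₂ - τ₁ = (kx : ℂ) + Complex.I * (ky : ℂ) ∧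
        τ₂⁻¹ - τ₁⁻¹ = (kx : ℂ) - Complex.I * (ky : ℂ)) →
        ‖τ₁‖ = 1 ∧ ‖τ₂‖ = 1) := by
  intro τ₁ τ₂ hτ₁ hτ₂
  set K := kx ^ 2 + ky ^ 2
  set k : ℂ := kx + I * ky
  set r := Real.sqrt ((4 - K) / K)
  have hconj : (kx : ℂ) - I * ky = conj k := by simp [k, sub_eq_add_neg]
  have hK : k * conj k = K := by
    rw [mul_conj, show k = kx + ky * I by simp only [k, mul_comm I], normSq_add_mul_I]
  have hk : k ≠ 0 := left_ne_zero_of_mul (b := conj k) (by rw [hK]; exact_mod_cast h0.ne')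
  have hr : 1 - 4 / (k * conj k) = (I * r) ^ 2 := by
    rw [hK, mul_pow, I_sq, ← ofReal_pow, Real.sq_sqrt (div_nonneg (by linarith) h0.le)]
    have : (K : ℂ) ≠ 0 := by exact_mod_cast h0.ne'
    push_cast
    field_simp
    ring
  have hpairs : (τ₂ - τ₁ = k ∧ τ₂⁻¹ - τ₁⁻¹ = kx - I * ky) ↔ ∃ s : ℝ, (s = 1 ∨ s = -1) ∧
      τ₁ = k / 2 * (-1 + s * I * r) ∧ τ₂ = k / 2 * (1 + s * I * r) := by
    rw [hconj, sub_eq_and_inv_sub_inv_eq_iff hτ₁ hτ₂,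
      eq_add_and_mul_mul_eq_neg_iff hk ((map_ne_zero _).2 hk), hr,
      exists_sq_eq_sq_and_iff_exists_sign]
    simp only [mul_assoc]
  refine ⟨hpairs, fun h => ?_⟩
  obtain ⟨s, -, h₁, h₂⟩ := hpairs.1 h
  have heq : ‖τ₁‖ = ‖τ₂‖ := by
    rw [h₁, h₂, norm_mul, norm_mul, norm_neg_one_add_of_re_eq_zero (by simp)]
  rw [hconj, sub_eq_and_inv_sub_inv_eq_iff hτ₁ hτ₂] at h
  have hτ₁_norm := norm_eq_one_of_mul_mul_eq_neg hk (by simp) h.2 heq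
  exact ⟨hτ₁_norm, heq ▸ hτ₁_norm⟩
end

section
/- Let k_x, k_y ∈ ℝ with k_x² + k_y² > 4. Then τ₁ = ((k_x + ik_y)/2)(−1 + √((k_x² + k_y² − 4)/(k_x² + k_y²))) and τ₂ = −1/τ̄₁ satisfy τ₂ − τ₁ = k_x + ik_y and 1/τ₂ − 1/τ₁ = k_x − ik_y. -/
open Complex

/-- Resonant pairs for stable modes: for `kₓ² + k_y² > 4`,
`τ₁ = ((kₓ+ik_y)/2)(−1 + √((kₓ²+k_y²−4)/(kₓ²+k_y²)))` and `τ₂ = −1/τ̄₁`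
satisfy `τ₂ − τ₁ = kₓ + ik_y` and `1/τ₂ − 1/τ₁ = kₓ − ik_y`. -/
theorem resonant_pairs_stable_modes
    (kx ky : ℝ) (h : 4 < kx ^ 2 + ky ^ 2)
    (τ₁ τ₂ : ℂ)
    (hτ₁ : τ₁ = (((kx : ℂ) + Complex.I * (ky : ℂ)) / 2) *
      (-1 + (Real.sqrt ((kx ^ 2 + ky ^ 2 - 4) / (kx ^ 2 + ky ^ 2)) : ℂ)))
    (hτ₂ : τ₂ = -((starRingEnd ℂ) τ₁)⁻¹) :
    τ₂ - τ₁ = (kx : ℂ) + Complex.I * (ky : ℂ) ∧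
    τ₂⁻¹ - τ₁⁻¹ = (kx : ℂ) - Complex.I * (ky : ℂ) := by
  have hK : (0:ℝ) < kx^2 + ky^2 := by nlinarith
  set s : ℝ := Real.sqrt ((kx ^ 2 + ky ^ 2 - 4) / (kx ^ 2 + ky ^ 2)) with hsdef
  have hs0 : 0 ≤ s := Real.sqrt_nonneg _
  have hs2 : s^2 = (kx ^ 2 + ky ^ 2 - 4) / (kx ^ 2 + ky ^ 2) := by
    rw [hsdef, Real.sq_sqrt (div_nonneg (by linarith) (by linarith))]
  have hs2K : s^2 * (kx^2+ky^2) = kx^2+ky^2-4 := by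
    rw [hs2]; field_simp
  have hslt : s^2 < 1 := by
    rw [hs2, div_lt_one hK]; linarith
  have hs1 : s < 1 := by nlinarith
  have hs2c : ((s:ℂ))^2 * ((kx:ℂ)^2+(ky:ℂ)^2) = (kx:ℂ)^2+(ky:ℂ)^2-4 := by
    exact_mod_cast congrArg (Complex.ofReal) hs2K
  have hz : (kx:ℂ) + Complex.I * ky ≠ 0 := by
    intro h0
    rw [Complex.ext_iff] at h0
    simp at h0
    nlinarith [h0.1, h0.2]
  have hm : (-1 + (s:ℂ)) ≠ 0 := by
    intro h0
    rw [Complex.ext_iff] at h0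
    simp at h0
    linarith
  have hconj : (starRingEnd ℂ) τ₁ = (((kx:ℂ) - Complex.I * ky)/2) * (-1 + (s:ℂ)) := by
    rw [hτ₁]
    simp [map_mul, map_div₀, map_add, map_neg, Complex.conj_ofReal, Complex.conj_I,
      map_ofNat]
    tauto
  have hzb : (kx:ℂ) - Complex.I * ky ≠ 0 := by
    intro h0
    rw [Complex.ext_iff] at h0
    simp at h0
    nlinarith [h0.1, h0.2]
  have hτ₁ne : τ₁ ≠ 0 := by
    rw [hτ₁]
    exact mul_ne_zero (div_ne_zero hz two_ne_zero) hm
  have hcne : (starRingEnd ℂ) τ₁ ≠ 0 := by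
    rw [hconj]
    exact mul_ne_zero (div_ne_zero hzb two_ne_zero) hm
  have key : (starRingEnd ℂ) τ₁ * (((kx:ℂ) + Complex.I * ky) + τ₁) = -1 := by
    rw [hconj, hτ₁]
    linear_combination (1/4 : ℂ) * hs2c +
      (-(ky:ℂ)^2 * ((s:ℂ)^2 - 1)/4) * Complex.I_sq
  have key2 : τ₁ * (((kx:ℂ) - Complex.I * ky) + (starRingEnd ℂ) τ₁) = -1 := by
    rw [hconj, hτ₁]
    linear_combination (1/4 : ℂ) * hs2c +
      (-(ky:ℂ)^2 * ((s:ℂ)^2 - 1)/4) * Complex.I_sq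
  constructor
  · rw [hτ₂]
    field_simp
    linear_combination -key
  · rw [hτ₂]
    rw [inv_neg, inv_inv]
    field_simp
    linear_combination -key2
end
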